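/- Under the preconditioner setup: κ( P̂^{-1/2} (A + μI) P̂^{-1/2} ) ≥ max{ 1, (λ̂_k + μ − ‖ℰ‖₂)/(μ + λ_min(A)) }. -/

import Mathlib

/-!
Let `P = P̂⁻¹`, `S = P^{1/2}` and `M = S (A + μI) S`. The `k`-th column `u` of `Û` satisfies
`P u = u`, hence `S u = u` and `λ_max(M) ≥ uᵀ(A + μI)u = λ̂_k + μ + uᵀEu + uᵀℰu ≥ λ̂_k + μ - ‖ℰ‖₂`.
On the other hand `I - P = Û diag(1 - (λ̂_k + μ)/(λ̂_j + μ)) Ûᵀ ⪰ 0`, so `S` is a contraction;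
as `M` is positive definite, this gives `λ_min(M) ≤ λ_min(A + μI) = μ + λ_min(A)`.
-/

open Matrix

/-- The spectral norm (largest singular value) of a real matrix,
as the `ℓ²→ℓ²` operator norm. -/
noncomputable def spectralNorm2 {m n : ℕ} (M : Matrix (Fin m) (Fin n) ℝ) : ℝ :=
  ‖LinearMap.toContinuousLinearMap (Matrix.toEuclideanLin M)‖

/-- The positive semidefinite square root of a positive semidefinite matrix
(`Matrix.PosSemidef.sqrt` of the older Mathlib, with its old definition). -/
noncomputable def Matrix.PosSemidef.sqrt {n : Type*} [Fintype n] [DecidableEq n]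
    {A : Matrix n n ℝ} (hA : A.PosSemidef) : Matrix n n ℝ :=
  hA.1.eigenvectorUnitary.1 * diagonal ((↑) ∘ (√·) ∘ hA.1.eigenvalues) *
    (star hA.1.eigenvectorUnitary : Matrix n n ℝ)

/-- The largest eigenvalue of a real symmetric matrix, as the supremum of the
Rayleigh quotient over the unit sphere. -/
noncomputable def lmax {n : ℕ} (M : Matrix (Fin n) (Fin n) ℝ) : ℝ :=
  ⨆ x : Metric.sphere (0 : EuclideanSpace ℝ (Fin n)) 1,
    (inner ℝ (x : EuclideanSpace ℝ (Fin n))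
      (Matrix.toEuclideanLin M (x : EuclideanSpace ℝ (Fin n))) : ℝ)

/-- The smallest eigenvalue of a real symmetric matrix, as the infimum of the
Rayleigh quotient over the unit sphere. -/
noncomputable def lmin {n : ℕ} (M : Matrix (Fin n) (Fin n) ℝ) : ℝ :=
  ⨅ x : Metric.sphere (0 : EuclideanSpace ℝ (Fin n)) 1,
    (inner ℝ (x : EuclideanSpace ℝ (Fin n))
      (Matrix.toEuclideanLin M (x : EuclideanSpace ℝ (Fin n))) : ℝ)

namespace Matrix.PosSemidef

variable {n : Type*} [Fintype n] [DecidableEq n] {A : Matrix n n ℝ}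

lemma posSemidef_sqrt (hA : A.PosSemidef) : hA.sqrt.PosSemidef :=
  (posSemidef_diagonal_iff.mpr fun i => by simp [Real.sqrt_nonneg]).mul_mul_conjTranspose_same
    (hA.1.eigenvectorUnitary : Matrix n n ℝ)

lemma sqrt_mul_self (hA : A.PosSemidef) : hA.sqrt * hA.sqrt = A := by
  have hU : (star hA.1.eigenvectorUnitary : Matrix n n ℝ) * hA.1.eigenvectorUnitary.1 = 1 :=
    Unitary.star_mul_self_of_mem hA.1.eigenvectorUnitary.2
  have hD : diagonal ((↑) ∘ (√·) ∘ hA.1.eigenvalues) * diagonal ((↑) ∘ (√·) ∘ hA.1.eigenvalues)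
      = diagonal (RCLike.ofReal ∘ hA.1.eigenvalues : n → ℝ) := by
    rw [diagonal_mul_diagonal]; congr 1; funext i
    simp [Real.mul_self_sqrt (hA.eigenvalues_nonneg i)]
  conv_rhs => rw [hA.1.spectral_theorem, Unitary.conjStarAlgAut_apply]
  rw [Matrix.PosSemidef.sqrt, show ∀ X Y Z : Matrix n n ℝ, X * Y * Z * (X * Y * Z) =
    X * (Y * (Z * X) * Y) * Z by intro X Y Z; simp only [Matrix.mul_assoc], hU, Matrix.mul_one, hD]

/-- `(√A + 1)(√A u - u) = A u - u = 0`, and `√A + 1` is invertible. -/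
lemma sqrt_mulVec_of_mulVec_eq_self (hA : A.PosSemidef) {u : n → ℝ} (hu : A *ᵥ u = u) :
    hA.sqrt *ᵥ u = u := by
  have hinj : Function.Injective (hA.sqrt + 1).mulVec :=
    mulVec_injective_iff_isUnit.mpr (PosDef.posSemidef_add hA.posSemidef_sqrt PosDef.one).isUnit
  refine sub_eq_zero.mp (hinj ?_)
  rw [mulVec_zero, add_mulVec, mulVec_sub, mulVec_mulVec, sqrt_mul_self, hu, one_mulVec]
  abel

end Matrix.PosSemidef

section Rayleigh

open WithLp

variable {n : ℕ} (M : Matrix (Fin n) (Fin n) ℝ)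

lemma dotProduct_ofLp_self (x : EuclideanSpace ℝ (Fin n)) : ofLp x ⬝ᵥ ofLp x = ‖x‖ ^ 2 := by
  rw [← real_inner_self_eq_norm_sq, EuclideanSpace.inner_eq_star_dotProduct, star_trivial]

lemma toLp_mem_sphere {v : Fin n → ℝ} (hv : v ⬝ᵥ v = 1) :
    toLp 2 v ∈ Metric.sphere (0 : EuclideanSpace ℝ (Fin n)) 1 := by
  rw [mem_sphere_zero_iff_norm, ← pow_left_inj₀ (norm_nonneg _) zero_le_one two_ne_zero,
    ← dotProduct_ofLp_self, one_pow]
  exact hv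

lemma dotProduct_ofLp_self_of_mem_sphere {x : EuclideanSpace ℝ (Fin n)}
    (hx : x ∈ Metric.sphere (0 : EuclideanSpace ℝ (Fin n)) 1) : ofLp x ⬝ᵥ ofLp x = 1 := by
  rw [dotProduct_ofLp_self, mem_sphere_zero_iff_norm.mp hx, one_pow]

lemma inner_toEuclideanLin_self (x : EuclideanSpace ℝ (Fin n)) :
    inner ℝ x (toEuclideanLin M x) = ofLp x ⬝ᵥ (M *ᵥ ofLp x) := by
  rw [EuclideanSpace.inner_eq_star_dotProduct, star_trivial, dotProduct_comm]
  rfl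

lemma lmax_eq_iSup : lmax M = ⨆ x : Metric.sphere (0 : EuclideanSpace ℝ (Fin n)) 1,
    ofLp (x : EuclideanSpace ℝ (Fin n)) ⬝ᵥ (M *ᵥ ofLp (x : EuclideanSpace ℝ (Fin n))) := by
  simp only [lmax, inner_toEuclideanLin_self]

lemma lmin_eq_iInf : lmin M = ⨅ x : Metric.sphere (0 : EuclideanSpace ℝ (Fin n)) 1,
    ofLp (x : EuclideanSpace ℝ (Fin n)) ⬝ᵥ (M *ᵥ ofLp (x : EuclideanSpace ℝ (Fin n))) := by
  simp only [lmin, inner_toEuclideanLin_self]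

lemma nonempty_sphere_of_pos (hn : 0 < n) :
    Nonempty (Metric.sphere (0 : EuclideanSpace ℝ (Fin n)) 1) :=
  have : Nonempty (Fin n) := ⟨⟨0, hn⟩⟩
  (NormedSpace.sphere_nonempty.mpr zero_le_one).to_subtype

lemma isCompact_range_quadForm : IsCompact (Set.range
    fun x : Metric.sphere (0 : EuclideanSpace ℝ (Fin n)) 1 =>
      ofLp (x : EuclideanSpace ℝ (Fin n)) ⬝ᵥ (M *ᵥ ofLp (x : EuclideanSpace ℝ (Fin n)))) := by
  rw [← Set.image_eq_range (fun x : EuclideanSpace ℝ (Fin n) => ofLp x ⬝ᵥ (M *ᵥ ofLp x))]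
  exact (isCompact_sphere 0 1).image (by fun_prop)

lemma dotProduct_mulVec_le_lmax {v : Fin n → ℝ} (hv : v ⬝ᵥ v = 1) : v ⬝ᵥ (M *ᵥ v) ≤ lmax M :=
  lmax_eq_iSup M ▸
    le_ciSup (isCompact_range_quadForm M).bddAbove ⟨toLp 2 v, toLp_mem_sphere hv⟩

lemma lmin_le_dotProduct_mulVec {v : Fin n → ℝ} (hv : v ⬝ᵥ v = 1) : lmin M ≤ v ⬝ᵥ (M *ᵥ v) :=
  lmin_eq_iInf M ▸
    ciInf_le (isCompact_range_quadForm M).bddBelow ⟨toLp 2 v, toLp_mem_sphere hv⟩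

lemma exists_dotProduct_mulVec_eq_lmin (hn : 0 < n) :
    ∃ v : Fin n → ℝ, v ⬝ᵥ v = 1 ∧ v ⬝ᵥ (M *ᵥ v) = lmin M := by
  have := nonempty_sphere_of_pos hn
  obtain ⟨⟨x, hx⟩, hmin⟩ := (isCompact_range_quadForm M).sInf_mem (Set.range_nonempty _)
  exact ⟨ofLp x, dotProduct_ofLp_self_of_mem_sphere hx, by rw [lmin_eq_iInf]; exact hmin⟩

lemma le_lmin (hn : 0 < n) {c : ℝ} (h : ∀ v : Fin n → ℝ, v ⬝ᵥ v = 1 → c ≤ v ⬝ᵥ (M *ᵥ v)) :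
    c ≤ lmin M := by
  have := nonempty_sphere_of_pos hn
  rw [lmin_eq_iInf]
  exact le_ciInf fun ⟨_, hx⟩ => h _ (dotProduct_ofLp_self_of_mem_sphere hx)

lemma lmin_le_lmax (hn : 0 < n) : lmin M ≤ lmax M := by
  obtain ⟨v, hv, hmin⟩ := exists_dotProduct_mulVec_eq_lmin M hn
  exact hmin ▸ dotProduct_mulVec_le_lmax M hv

lemma _root_.Matrix.PosDef.lmin_pos {M : Matrix (Fin n) (Fin n) ℝ} (hM : M.PosDef) (hn : 0 < n) :
    0 < lmin M := by
  obtain ⟨v, hv, hmin⟩ := exists_dotProduct_mulVec_eq_lmin M hn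
  have hv0 : v ≠ 0 := by rintro rfl; simp at hv
  simpa [← hmin] using hM.dotProduct_mulVec_pos hv0

lemma lmin_add_smul_one (hn : 0 < n) (c : ℝ) : lmin (M + c • 1) = lmin M + c := by
  have := nonempty_sphere_of_pos hn
  rw [lmin_eq_iInf, lmin_eq_iInf, ciInf_add (isCompact_range_quadForm M).bddBelow]
  congr 1 with ⟨x, hx⟩
  rw [add_mulVec, dotProduct_add, smul_mulVec, one_mulVec, dotProduct_smul, smul_eq_mul,
    dotProduct_ofLp_self_of_mem_sphere hx, mul_one]

lemma lmin_mul_dotProduct_self_le (v : Fin n → ℝ) : lmin M * (v ⬝ᵥ v) ≤ v ⬝ᵥ (M *ᵥ v) := by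
  rcases eq_or_ne v 0 with rfl | hv0
  · simp
  have hpos : 0 < v ⬝ᵥ v := by simpa using dotProduct_star_self_pos_iff.mpr hv0
  set r := √(v ⬝ᵥ v)
  have hrr : r * r = v ⬝ᵥ v := Real.mul_self_sqrt hpos.le
  have hr : r ≠ 0 := (Real.sqrt_pos.mpr hpos).ne'
  have hunit : (r⁻¹ • v) ⬝ᵥ (r⁻¹ • v) = 1 := by
    rw [smul_dotProduct, dotProduct_smul, smul_smul, ← hrr, smul_eq_mul]
    field_simp
  have h := lmin_le_dotProduct_mulVec M hunit
  rw [mulVec_smul, smul_dotProduct, dotProduct_smul, smul_smul, smul_eq_mul] at h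
  rw [← hrr]
  calc lmin M * (r * r) ≤ r⁻¹ * r⁻¹ * (v ⬝ᵥ (M *ᵥ v)) * (r * r) := by gcongr
    _ = v ⬝ᵥ (M *ᵥ v) := by field_simp

end Rayleigh

lemma abs_dotProduct_mulVec_le_spectralNorm2 {n : ℕ} (N : Matrix (Fin n) (Fin n) ℝ)
    (v : Fin n → ℝ) : |v ⬝ᵥ (N *ᵥ v)| ≤ spectralNorm2 N * (v ⬝ᵥ v) := by
  set x : EuclideanSpace ℝ (Fin n) := WithLp.toLp 2 v
  have hx : v ⬝ᵥ v = ‖x‖ * ‖x‖ := by rw [← sq, ← dotProduct_ofLp_self]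
  rw [← inner_toEuclideanLin_self N x, hx, ← mul_assoc]
  calc |inner ℝ x (toEuclideanLin N x)| ≤ ‖x‖ * ‖toEuclideanLin N x‖ := abs_real_inner_le_norm _ _
    _ ≤ ‖x‖ * (spectralNorm2 N * ‖x‖) :=
      mul_le_mul_of_nonneg_left ((LinearMap.toContinuousLinearMap _).le_opNorm x) (norm_nonneg x)
    _ = spectralNorm2 N * ‖x‖ * ‖x‖ := by ring

section Congruence

variable {n : ℕ} {S B : Matrix (Fin n) (Fin n) ℝ}

lemma dotProduct_mulVec_of_isHermitian (hS : S.IsHermitian) (u w : Fin n → ℝ) :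
    u ⬝ᵥ (S *ᵥ w) = (S *ᵥ u) ⬝ᵥ w := by
  rw [dotProduct_mulVec, ← mulVec_transpose, ← conjTranspose_eq_transpose_of_trivial, hS.eq]

lemma dotProduct_mulVec_congr (hS : S.IsHermitian) (w : Fin n → ℝ) :
    w ⬝ᵥ ((S * B * S) *ᵥ w) = (S *ᵥ w) ⬝ᵥ (B *ᵥ (S *ᵥ w)) := by
  rw [← mulVec_mulVec, ← mulVec_mulVec, dotProduct_mulVec_of_isHermitian hS]

lemma dotProduct_mulVec_le_lmax_congr (hS : S.IsHermitian) {u : Fin n → ℝ} (hu : u ⬝ᵥ u = 1)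
    (hSu : S *ᵥ u = u) : u ⬝ᵥ (B *ᵥ u) ≤ lmax (S * B * S) := by
  simpa only [dotProduct_mulVec_congr hS, hSu] using dotProduct_mulVec_le_lmax (S * B * S) hu

/-- Every unit `v` is `S w` for some `w` with `‖w‖ ≥ 1`. -/
lemma lmin_congr_le (hn : 0 < n) (hS : S.IsHermitian) (hSunit : IsUnit S)
    (hcontr : (1 - S * S).PosSemidef) (hpos : 0 ≤ lmin (S * B * S)) :
    lmin (S * B * S) ≤ lmin B := by
  refine le_lmin B hn fun v hv => ?_
  set w := S⁻¹ *ᵥ v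
  have hSw : S *ᵥ w = v := by
    rw [mulVec_mulVec, mul_nonsing_inv _ ((isUnit_iff_isUnit_det S).mp hSunit), one_mulVec]
  have hw : 1 ≤ w ⬝ᵥ w := by
    have h := hcontr.dotProduct_mulVec_nonneg w
    rw [star_trivial, sub_mulVec, one_mulVec, dotProduct_sub, ← mulVec_mulVec,
      dotProduct_mulVec_of_isHermitian hS, hSw, hv] at h
    linarith
  calc lmin (S * B * S) ≤ lmin (S * B * S) * (w ⬝ᵥ w) := le_mul_of_one_le_right hpos hw
    _ ≤ w ⬝ᵥ ((S * B * S) *ᵥ w) := lmin_mul_dotProduct_self_le _ w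
    _ = v ⬝ᵥ (B *ᵥ v) := by rw [dotProduct_mulVec_congr hS, hSw]

end Congruence

section Preconditioner

variable {n k : ℕ} (U : Matrix (Fin n) (Fin k) ℝ)

/-- `P̂⁻¹ = I - ÛÛᵀ + c Û (diag d + μ I)⁻¹ Ûᵀ`; the preconditioner of the theorem takes
`c = d_k + μ`. -/
noncomputable def nystromPreconditionerInv (d : Fin k → ℝ) (μ c : ℝ) : Matrix (Fin n) (Fin n) ℝ :=
  1 - U * Uᵀ + c • (U * (diagonal d + μ • 1)⁻¹ * Uᵀ)

variable {U}

lemma col_dotProduct_col_of_transpose_mul_self (hU : Uᵀ * U = 1) (i : Fin k) :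
    U.col i ⬝ᵥ U.col i = 1 := by
  simpa [mul_apply, dotProduct] using congr_fun (congr_fun hU i) i

lemma mul_diagonal_mul_transpose_mulVec_col (hU : Uᵀ * U = 1) (d : Fin k → ℝ) (i : Fin k) :
    (U * diagonal d * Uᵀ) *ᵥ U.col i = d i • U.col i := by
  rw [← mulVec_single_one, mulVec_mulVec, Matrix.mul_assoc, Matrix.mul_assoc, hU, Matrix.mul_one,
    ← mulVec_mulVec, diagonal_mulVec_single, ← smul_eq_mul, Pi.single_smul',
    mulVec_smul]

lemma posSemidef_mul_diagonal_mul_transpose {d : Fin k → ℝ} (hd : ∀ j, 0 ≤ d j) :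
    (U * diagonal d * Uᵀ).PosSemidef := by
  simpa using (posSemidef_diagonal_iff.mpr hd).mul_mul_conjTranspose_same U

lemma inv_diagonal_add_smul_one {d : Fin k → ℝ} {μ : ℝ} (h : ∀ j, d j + μ ≠ 0) :
    (diagonal d + μ • (1 : Matrix (Fin k) (Fin k) ℝ))⁻¹ = diagonal fun j => (d j + μ)⁻¹ := by
  rw [smul_one_eq_diagonal, diagonal_add]
  refine inv_eq_left_inv ?_
  rw [diagonal_mul_diagonal, ← diagonal_one]
  exact congrArg diagonal (funext fun j => inv_mul_cancel₀ (h j))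

lemma one_sub_nystromPreconditionerInv {d : Fin k → ℝ} {μ : ℝ} (h : ∀ j, d j + μ ≠ 0) (c : ℝ) :
    1 - nystromPreconditionerInv U d μ c = U * diagonal (fun j => 1 - c * (d j + μ)⁻¹) * Uᵀ := by
  have hdiag : diagonal (fun j => 1 - c * (d j + μ)⁻¹) = 1 - c • diagonal fun j => (d j + μ)⁻¹ := by
    rw [← diagonal_one, ← diagonal_smul, ← diagonal_sub]
    rfl
  rw [nystromPreconditionerInv, inv_diagonal_add_smul_one h, hdiag, Matrix.mul_sub, Matrix.sub_mul,
    Matrix.mul_one, Matrix.mul_smul, Matrix.smul_mul]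
  abel

lemma nystromPreconditionerInv_mulVec_col (hU : Uᵀ * U = 1) {d : Fin k → ℝ} {μ : ℝ}
    (h : ∀ j, d j + μ ≠ 0) (i : Fin k) :
    nystromPreconditionerInv U d μ (d i + μ) *ᵥ U.col i = U.col i := by
  have := mul_diagonal_mul_transpose_mulVec_col hU (fun j => 1 - (d i + μ) * (d j + μ)⁻¹) i
  rw [← one_sub_nystromPreconditionerInv h, sub_mulVec, one_mulVec, mul_inv_cancel₀ (h i),
    sub_self, zero_smul, sub_eq_zero] at this
  exact this.symm

lemma posSemidef_one_sub_nystromPreconditionerInv {d : Fin k → ℝ} {μ c : ℝ}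
    (hd : ∀ j, 0 < d j + μ) (hcd : ∀ j, c ≤ d j + μ) :
    (1 - nystromPreconditionerInv U d μ c).PosSemidef := by
  rw [one_sub_nystromPreconditionerInv fun j => (hd j).ne']
  refine posSemidef_mul_diagonal_mul_transpose fun j => ?_
  rw [sub_nonneg, ← div_eq_mul_inv, div_le_one (hd j)]
  exact hcd j

lemma add_sub_spectralNorm2_le_dotProduct_mulVec_col (hU : Uᵀ * U = 1) (d : Fin k → ℝ)
    {E Err : Matrix (Fin n) (Fin n) ℝ} (hE : E.PosSemidef) (μ : ℝ) (i : Fin k) :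
    d i + μ - spectralNorm2 Err ≤
      U.col i ⬝ᵥ ((U * diagonal d * Uᵀ + E + Err + μ • 1) *ᵥ U.col i) := by
  have hErru := abs_le.mp (abs_dotProduct_mulVec_le_spectralNorm2 Err (U.col i))
  have hEu := hE.dotProduct_mulVec_nonneg (U.col i)
  simp only [add_mulVec, dotProduct_add, mul_diagonal_mul_transpose_mulVec_col hU, smul_mulVec,
    one_mulVec, dotProduct_smul, smul_eq_mul, col_dotProduct_col_of_transpose_mul_self hU,
    star_trivial] at hErru hEu ⊢
  linarith

end Preconditioner

lemma max_one_div_le_div {a b l m : ℝ} (hm : 0 < m) (hml : m ≤ l) (hal : a ≤ l) (hmb : m ≤ b) :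
    max 1 (a / b) ≤ l / m :=
  max_le ((one_le_div hm).mpr hml) (div_le_div₀ (hm.le.trans hml) hal hm hmb)

/-- Preconditioner setup: `n > k ≥ 1`, `A` real symmetric with `A + μI` positive
definite (`μ ≥ 0`), `Û` with orthonormal columns (`ÛᵀÛ = I`),
`Θ̂ = diag(λ̂_1,…,λ̂_k)` with `λ̂_1 ≥ … ≥ λ̂_k > 0`, `Â_N = Û Θ̂ Ûᵀ`,
`A = Â_N + E + ℰ` with `E, ℰ` symmetric and `E` positive semidefinite, and
`P̂⁻¹ = I − ÛÛᵀ + (λ̂_k + μ) Û (Θ̂ + μI)⁻¹ Ûᵀ`, which is symmetric positive definite;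
`P̂^{-1/2}` is its positive semidefinite square root.
Then `κ(P̂^{-1/2}(A + μI)P̂^{-1/2}) ≥ max {1, (λ̂_k + μ − ‖ℰ‖₂)/(μ + λ_min(A))}`. -/
theorem stmt11 {n k : ℕ} (hk : 1 ≤ k) (hkn : k < n)
    (A : Matrix (Fin n) (Fin n) ℝ)
    (μ : ℝ) (hμ : 0 ≤ μ) (hAμ : (A + μ • 1).PosDef)
    (U : Matrix (Fin n) (Fin k) ℝ) (hU : Uᵀ * U = 1)
    (lamh : Fin k → ℝ) (hlamh : Antitone lamh) (hlamhk : 0 < lamh ⟨k - 1, by omega⟩)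
    (E Err : Matrix (Fin n) (Fin n) ℝ)
    (hEpsd : E.PosSemidef)
    (hsum : A = U * Matrix.diagonal lamh * Uᵀ + E + Err)
    (hPinvPD : ((1 : Matrix (Fin n) (Fin n) ℝ) - U * Uᵀ +
      (lamh ⟨k - 1, by omega⟩ + μ) • (U * (Matrix.diagonal lamh + μ • 1)⁻¹ * Uᵀ)).PosDef)
     :
    let S := hPinvPD.posSemidef.sqrt
    let M := S * (A + μ • 1) * S
    max 1 ((lamh ⟨k - 1, by omega⟩ + μ - spectralNorm2 Err) / (μ + lmin A)) ≤
      lmax M / lmin M := by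
  intro S M
  have hn : 0 < n := by omega
  have hlam : ∀ j, lamh ⟨k - 1, by omega⟩ ≤ lamh j :=
    fun j => hlamh (Fin.le_def.mpr (Nat.le_sub_one_of_lt j.isLt))
  have hpos : ∀ j, 0 < lamh j + μ := fun j => by linarith [hlam j]
  have hP : (nystromPreconditionerInv U lamh μ _).PosSemidef := hPinvPD.posSemidef
  have hS : S.IsHermitian := hP.posSemidef_sqrt.isHermitian
  have hSS : S * S = nystromPreconditionerInv U lamh μ _ := hP.sqrt_mul_self
  have hSunit : IsUnit S := isUnit_of_mul_isUnit_left (by rw [hSS]; exact hPinvPD.isUnit)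
  have hMpos : 0 < lmin M := by
    have := hAμ.conjTranspose_mul_mul_same (mulVec_injective_iff_isUnit.mpr hSunit)
    exact (hS.eq ▸ this).lmin_pos hn
  have hupper : lamh ⟨k - 1, by omega⟩ + μ - spectralNorm2 Err ≤ lmax M := by
    refine (add_sub_spectralNorm2_le_dotProduct_mulVec_col hU lamh hEpsd μ _).trans ?_
    rw [← hsum]
    refine dotProduct_mulVec_le_lmax_congr hS (col_dotProduct_col_of_transpose_mul_self hU _) ?_
    exact hP.sqrt_mulVec_of_mulVec_eq_self
      (nystromPreconditionerInv_mulVec_col hU (fun j => (hpos j).ne') _)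
  have hlower : lmin M ≤ μ + lmin A := by
    rw [add_comm, ← lmin_add_smul_one A hn]
    refine lmin_congr_le hn hS hSunit ?_ hMpos.le
    exact hSS ▸ posSemidef_one_sub_nystromPreconditionerInv hpos fun j => by linarith [hlam j]
  exact max_one_div_le_div hMpos (lmin_le_lmax M hn) hupper hlower
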